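/- The extremes test is asymptotically powerless when the contamination correlation stays bounded away from 1: if ε_n = n^{-β} with β ∈ (0,1) fixed and (ρ_n) is a sequence with ρ_n ≤ ρ* for all n for some fixed ρ* < 1, then for every sequence of thresholds (t_n), the sum of the type I and type II error probabilities of the test rejecting when min_{1≤i≤n} |U_i| ≤ t_n, where U_i := (X_i − Y_i)/√2, has liminf at least 1. -/

import Mathlib

open MeasureTheory ProbabilityTheory Real Filter Topology

noncomputable section

/-- The standard normal distribution on ℝ. -/
def stdGauss : Measure ℝ := gaussianReal 0 1

/-- Two independent standard normals. -/
def stdGauss2 : Measure (ℝ × ℝ) := stdGauss.prod stdGauss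

/-- `N(0, Σ_ρ)`: the centered bivariate normal with unit marginal variances and
correlation `ρ`, i.e. the law of `(Z₁, ρ Z₁ + √(1-ρ²) Z₂)` for independent standard
normal `Z₁, Z₂`. -/
def biNormal (ρ : ℝ) : Measure (ℝ × ℝ) :=
  stdGauss2.map fun z => (z.1, ρ * z.1 + Real.sqrt (1 - ρ ^ 2) * z.2)

/-- The contamination mixture `P_{ε,ρ} = (1-ε) N(0,Σ₀) + ε N(0,Σ_ρ)`. -/
def mixture (ε ρ : ℝ) : Measure (ℝ × ℝ) :=
  ENNReal.ofReal (1 - ε) • biNormal 0 + ENNReal.ofReal ε • biNormal ρ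

/-- The `n`-fold product (i.i.d.) measure. -/
def iid (n : ℕ) (μ : Measure (ℝ × ℝ)) : Measure (Fin n → ℝ × ℝ) :=
  Measure.pi fun _ => μ
/-- The pairwise differences `Uᵢ = (Xᵢ - Yᵢ)/√2`. -/
def pairDiff (n : ℕ) (x : Fin n → ℝ × ℝ) (i : Fin n) : ℝ :=
  ((x i).1 - (x i).2) / Real.sqrt 2

/-- The rejection region of the extremes test: `min_{1 ≤ i ≤ n} |Uᵢ| ≤ t`
(equivalently, some `|Uᵢ| ≤ t`). -/
def extremesReject (n : ℕ) (t : ℝ) : Set (Fin n → ℝ × ℝ) :=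
  {x | ∃ i : Fin n, |pairDiff n x i| ≤ t}

/-!
Let `A = {p | |U p| ≤ t}`, `p₀ = N(0,Σ₀)(A)` and `p₁ = P_{ε,ρ}(A)`. By independence the error sum
is `1 - ((1 - p₀)ⁿ - (1 - p₁)ⁿ)`. Under `N(0,Σ_ρ)` the statistic `U` is `N(0, 1 - ρ)`, whose density
is at most `(1 - ρ)^{-1/2}` times the standard normal one; hence `p₁ - p₀ ≤ ε (c - 1) p₀` with
`c = (1 - ρ*)^{-1/2}`. The elementary bound `aⁿ - bⁿ ≤ δ (1 - aⁿ)` for `a - b ≤ δ (1 - a)`, applied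
with `a = 1 - p₀`, then shows that the error sum is at least `1 - ε_n (c - 1) → 1`, whatever `t_n`.
-/

open scoped NNReal

def diffStat (p : ℝ × ℝ) : ℝ := (p.1 - p.2) / √2

lemma measurable_diffStat : Measurable diffStat := by unfold diffStat; fun_prop

instance : IsProbabilityMeasure stdGauss := by unfold stdGauss; infer_instance

instance : IsProbabilityMeasure stdGauss2 := by unfold stdGauss2; infer_instance

instance (ρ : ℝ) : IsProbabilityMeasure (biNormal ρ) :=
  Measure.isProbabilityMeasure_map (by fun_prop)

lemma stdGauss2_map_linear (a b : ℝ) :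
    stdGauss2.map (fun z => a * z.1 + b * z.2) = gaussianReal 0 (a ^ 2 + b ^ 2).toNNReal := by
  have h : (fun z : ℝ × ℝ => a * z.1 + b * z.2)
      = (fun p : ℝ × ℝ => p.1 + p.2) ∘ Prod.map (a * ·) (b * ·) := rfl
  rw [h, ← Measure.map_map (by fun_prop) (by fun_prop), stdGauss2,
    ← Measure.map_prod_map _ _ (by fun_prop) (by fun_prop), stdGauss, gaussianReal_map_const_mul,
    gaussianReal_map_const_mul]
  -- `μ ∗ ν` is by definition the pushforward of `μ.prod ν` under addition
  change _ ∗ _ = _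
  rw [gaussianReal_conv_gaussianReal]
  congr
  · simp
  · ext; simp [sq_nonneg]

lemma map_diffStat_biNormal {ρ : ℝ} (hρ : ρ ^ 2 ≤ 1) :
    (biNormal ρ).map diffStat = gaussianReal 0 (1 - ρ).toNNReal := by
  have h : diffStat ∘ (fun z : ℝ × ℝ => (z.1, ρ * z.1 + √(1 - ρ ^ 2) * z.2))
      = fun z => (1 - ρ) / √2 * z.1 + -(√(1 - ρ ^ 2) / √2) * z.2 := by
    ext z; simp only [Function.comp_apply, diffStat]; ring
  rw [biNormal, Measure.map_map measurable_diffStat (by fun_prop), h, stdGauss2_map_linear]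
  congr 2
  rw [neg_sq, div_pow, div_pow, sq_sqrt (sub_nonneg.2 hρ), sq_sqrt zero_le_two]
  ring

lemma gaussianPDFReal_le_sqrt_div_mul {v w : ℝ≥0} (hv : v ≠ 0) (hvw : v ≤ w) (x : ℝ) :
    gaussianPDFReal 0 v x ≤ √(w / v) * gaussianPDFReal 0 w x := by
  have hv' : (0 : ℝ) < v := by positivity
  have hw' : (0 : ℝ) < w := hv'.trans_le hvw
  have hexp : rexp (-(x - 0) ^ 2 / (2 * v)) ≤ rexp (-(x - 0) ^ 2 / (2 * w)) := by
    rw [exp_le_exp, neg_div, neg_div, neg_le_neg_iff]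
    gcongr
  have hconst : (√(2 * π * v))⁻¹ = √(w / v) * (√(2 * π * w))⁻¹ := by
    have := sqrt_pos.2 hv'
    have := sqrt_pos.2 hw'
    rw [sqrt_mul' _ hv'.le, sqrt_mul' _ hw'.le, sqrt_div' _ hv'.le]
    field_simp
  rw [gaussianPDFReal, gaussianPDFReal, hconst, mul_assoc]
  gcongr

lemma gaussianReal_le_sqrt_div_smul {v w : ℝ≥0} (hv : v ≠ 0) (hvw : v ≤ w) :
    gaussianReal 0 v ≤ ENNReal.ofReal √(w / v) • gaussianReal 0 w := by
  have hw : w ≠ 0 := (pos_iff_ne_zero.2 hv |>.trans_le hvw).ne'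
  rw [gaussianReal_of_var_ne_zero _ hv, gaussianReal_of_var_ne_zero _ hw,
    ← withDensity_smul _ (measurable_gaussianPDF _ _)]
  refine withDensity_mono (Eventually.of_forall fun x => ?_)
  simp only [gaussianPDF, Pi.smul_apply, smul_eq_mul]
  rw [← ENNReal.ofReal_mul (sqrt_nonneg _)]
  exact ENNReal.ofReal_le_ofReal (gaussianPDFReal_le_sqrt_div_mul hv hvw x)

lemma biNormal_preimage_diffStat_le {ρ : ℝ} (hρ0 : 0 ≤ ρ) (hρ1 : ρ < 1) {B : Set ℝ}
    (hB : MeasurableSet B) :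
    (biNormal ρ (diffStat ⁻¹' B)).toReal ≤ (√(1 - ρ))⁻¹ * (biNormal 0 (diffStat ⁻¹' B)).toReal := by
  have hvar : (1 - ρ).toNNReal ≠ 0 := by simpa using hρ1
  have hle : (1 - ρ).toNNReal ≤ 1 := by simpa using hρ0
  have h := gaussianReal_le_sqrt_div_smul hvar hle B
  rw [← Measure.map_apply measurable_diffStat hB, ← Measure.map_apply measurable_diffStat hB,
    map_diffStat_biNormal (by nlinarith), map_diffStat_biNormal (by norm_num)]
  rw [Measure.smul_apply, smul_eq_mul] at h
  have := ENNReal.toReal_mono (by finiteness) h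
  simpa [ENNReal.toReal_mul, Real.coe_toNNReal _ (sub_nonneg.2 hρ1.le), sqrt_inv] using this

instance (n : ℕ) (μ : Measure (ℝ × ℝ)) [IsProbabilityMeasure μ] :
    IsProbabilityMeasure (iid n μ) := by
  unfold iid; infer_instance

lemma extremesReject_eq (n : ℕ) (t : ℝ) :
    extremesReject n t = (Set.univ.pi fun _ => (diffStat ⁻¹' {u | |u| ≤ t})ᶜ)ᶜ := by
  ext x
  simp [extremesReject, pairDiff, diffStat]

lemma iid_extremesReject (n : ℕ) (t : ℝ) (μ : Measure (ℝ × ℝ)) [IsProbabilityMeasure μ] :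
    (iid n μ (extremesReject n t)).toReal
      = 1 - (1 - (μ (diffStat ⁻¹' {u | |u| ≤ t})).toReal) ^ n := by
  have hA : MeasurableSet (diffStat ⁻¹' {u | |u| ≤ t}) :=
    measurable_diffStat (measurableSet_le measurable_abs measurable_const)
  rw [extremesReject_eq, prob_compl_eq_one_sub (MeasurableSet.univ_pi fun _ => hA.compl), iid,
    Measure.pi_pi, Finset.prod_const, Finset.card_univ, Fintype.card_fin, prob_compl_eq_one_sub hA,
    ENNReal.toReal_sub_of_le (pow_le_one' (by simp) n) ENNReal.one_ne_top, ENNReal.toReal_pow,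
    ENNReal.toReal_sub_of_le prob_le_one ENNReal.one_ne_top]
  simp

lemma isProbabilityMeasure_mixture {ε : ℝ} (h0 : 0 ≤ ε) (h1 : ε ≤ 1) (ρ : ℝ) :
    IsProbabilityMeasure (mixture ε ρ) := by
  constructor
  rw [mixture, Measure.add_apply, Measure.smul_apply, Measure.smul_apply, measure_univ,
    measure_univ, smul_eq_mul, smul_eq_mul, mul_one, mul_one, ← ENNReal.ofReal_add (by linarith) h0]
  norm_num

lemma mixture_apply_toReal {ε : ℝ} (h0 : 0 ≤ ε) (h1 : ε ≤ 1) (ρ : ℝ) (s : Set (ℝ × ℝ)) :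
    (mixture ε ρ s).toReal = (1 - ε) * (biNormal 0 s).toReal + ε * (biNormal ρ s).toReal := by
  rw [mixture, Measure.add_apply, Measure.smul_apply, Measure.smul_apply, smul_eq_mul,
    smul_eq_mul, ENNReal.toReal_add (by finiteness) (by finiteness), ENNReal.toReal_mul,
    ENNReal.toReal_mul, ENNReal.toReal_ofReal (by linarith), ENNReal.toReal_ofReal h0]

lemma pow_sub_pow_le_mul_one_sub_pow {a b δ : ℝ} (ha : 0 ≤ a) (hb0 : 0 ≤ b) (hb1 : b ≤ 1)
    (hδ : 0 ≤ δ) (hab : a - b ≤ δ * (1 - a)) (n : ℕ) : a ^ n - b ^ n ≤ δ * (1 - a ^ n) := by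
  have ha1 : a ≤ 1 := by nlinarith
  induction n with
  | zero => simp
  | succ n ih =>
    have hbn0 : 0 ≤ b ^ n := pow_nonneg hb0 n
    have hbn1 : b ^ n ≤ 1 := pow_le_one₀ hb0 hb1
    calc a ^ (n + 1) - b ^ (n + 1) = a * (a ^ n - b ^ n) + b ^ n * (a - b) := by ring
      _ ≤ a * (δ * (1 - a ^ n)) + δ * (1 - a) := by
        have hδa : 0 ≤ δ * (1 - a) := mul_nonneg hδ (sub_nonneg.2 ha1)
        refine add_le_add (mul_le_mul_of_nonneg_left ih ha) ?_
        nlinarith [mul_nonneg hbn0 (sub_nonneg.2 hab), mul_nonneg (sub_nonneg.2 hbn1) hδa]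
      _ = δ * (1 - a ^ (n + 1)) := by ring

lemma one_sub_le_extremes_errorSum {ε ρ ρstar : ℝ} (hε0 : 0 ≤ ε) (hε1 : ε ≤ 1) (hρ0 : 0 ≤ ρ)
    (hρ : ρ ≤ ρstar) (hρstar : ρstar < 1) (n : ℕ) (t : ℝ) :
    1 - ε * ((√(1 - ρstar))⁻¹ - 1) ≤ (iid n (biNormal 0) (extremesReject n t)).toReal
      + (1 - (iid n (mixture ε ρ) (extremesReject n t)).toReal) := by
  have := isProbabilityMeasure_mixture hε0 hε1 ρ
  set c := (√(1 - ρstar))⁻¹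
  set A := diffStat ⁻¹' {u : ℝ | |u| ≤ t}
  have hp₀ : (biNormal 0 A).toReal ≤ 1 := measureReal_le_one
  have hpε : (mixture ε ρ A).toReal ≤ 1 := measureReal_le_one
  have hA : MeasurableSet {u : ℝ | |u| ≤ t} := measurableSet_le measurable_abs measurable_const
  have hc : 1 ≤ c := one_le_inv₀ (sqrt_pos.2 (by linarith)) |>.2 (sqrt_le_one.2 (by linarith))
  have hcmp : (biNormal ρ A).toReal ≤ c * (biNormal 0 A).toReal :=
    (biNormal_preimage_diffStat_le hρ0 (hρ.trans_lt hρstar) hA).trans <|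
      mul_le_mul_of_nonneg_right (inv_anti₀ (sqrt_pos.2 (by linarith)) (sqrt_le_sqrt (by linarith)))
        ENNReal.toReal_nonneg
  have hgap : (1 - (biNormal 0 A).toReal) - (1 - (mixture ε ρ A).toReal)
      ≤ ε * (c - 1) * (1 - (1 - (biNormal 0 A).toReal)) := by
    rw [mixture_apply_toReal hε0 hε1]
    nlinarith
  have hpow := pow_sub_pow_le_mul_one_sub_pow (sub_nonneg.2 hp₀) (sub_nonneg.2 hpε)
    (sub_le_self _ ENNReal.toReal_nonneg) (mul_nonneg hε0 (sub_nonneg.2 hc)) hgap n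
  rw [iid_extremesReject, iid_extremesReject]
  nlinarith [pow_nonneg (sub_nonneg.2 hp₀) n, mul_nonneg hε0 (sub_nonneg.2 hc)]

theorem extremes_powerless_rho_bounded_general (β : ℝ) (hβ0 : 0 < β)
    (ρstar : ℝ) (hρstar : ρstar < 1)
    (ε ρ : ℕ → ℝ) (hε : ∀ n : ℕ, ε n = (n : ℝ) ^ (-β))
    (hρ0 : ∀ n : ℕ, 0 ≤ ρ n) (hρ1 : ∀ n : ℕ, ρ n ≤ ρstar) :
    ∀ t : ℕ → ℝ,
      1 ≤ Filter.liminf (fun n =>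
        ((iid n (biNormal 0)) (extremesReject n (t n))).toReal
          + (1 - ((iid n (mixture (ε n) (ρ n))) (extremesReject n (t n))).toReal)) atTop := by
  intro t
  have hε_lim : Tendsto ε atTop (𝓝 0) := by
    rw [funext hε]
    exact (tendsto_rpow_neg_atTop hβ0).comp tendsto_natCast_atTop_atTop
  have hlower : Tendsto (fun n => 1 - ε n * ((√(1 - ρstar))⁻¹ - 1)) atTop (𝓝 1) := by
    simpa using tendsto_const_nhds.sub (hε_lim.mul_const _)
  refine hlower.liminf_eq.symm.le.trans <| liminf_le_liminf ?_ hlower.isBoundedUnder_ge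
    (isCoboundedUnder_ge_of_le _ (x := 2) fun n => ?_)
  · filter_upwards [eventually_ge_atTop 1] with n hn
    have hεn : 0 ≤ ε n ∧ ε n ≤ 1 := by
      rw [hε]
      exact ⟨rpow_nonneg n.cast_nonneg _,
        rpow_le_one_of_one_le_of_nonpos (by exact_mod_cast hn) (by linarith)⟩
    exact one_sub_le_extremes_errorSum hεn.1 hεn.2 (hρ0 n) (hρ1 n) hρstar n (t n)
  · have h₀ : (iid n (biNormal 0) (extremesReject n (t n))).toReal ≤ 1 := measureReal_le_one
    linarith [(iid n (mixture (ε n) (ρ n)) (extremesReject n (t n))).toReal_nonneg]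

/-- if `ρₙ` stays bounded away from 1, the extremes test is asymptotically
powerless for any choice of thresholds `(tₙ)`. -/
theorem extremes_powerless_rho_bounded (β : ℝ) (hβ0 : 0 < β) (hβ1 : β < 1)
    (ρstar : ℝ) (hρstar : ρstar < 1)
    (ε ρ : ℕ → ℝ) (hε : ∀ n : ℕ, ε n = (n : ℝ) ^ (-β))
    (hρ0 : ∀ n : ℕ, 0 ≤ ρ n) (hρ1 : ∀ n : ℕ, ρ n ≤ ρstar) :
    ∀ t : ℕ → ℝ,
      1 ≤ Filter.liminf (fun n =>
        ((iid n (biNormal 0)) (extremesReject n (t n))).toReal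
          + (1 - ((iid n (mixture (ε n) (ρ n))) (extremesReject n (t n))).toReal)) atTop :=
  extremes_powerless_rho_bounded_general β hβ0 ρstar hρstar ε ρ hε hρ0 hρ1
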